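/- arXiv:2305.04164 — 2 statements merged into one kernel-verified Lean document; each statement's English description precedes it below -/
import Mathlib

section
/- In B_{m,n}(q,t) with m, n ≥ 2, the element (H_{-1} + q⁻¹) · e_2 · (H_{-1} + q⁻¹), where e_2 = e H_{-1}⁻¹ H_1 e, is fixed by the bar involution. -/
open scoped Classical

noncomputable section

/-- The field `ℚ(q,t)` of rational functions in two indeterminates over `ℚ`. -/
abbrev KK : Type := FractionRing (MvPolynomial (Fin 2) ℚ)

/-- The indeterminate `q` viewed inside `ℚ(q,t)`. -/
def qv : KK := algebraMap (MvPolynomial (Fin 2) ℚ) KK (MvPolynomial.X 0)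

/-- The indeterminate `t` viewed inside `ℚ(q,t)`. -/
def tv : KK := algebraMap (MvPolynomial (Fin 2) ℚ) KK (MvPolynomial.X 1)

/-- The valid indices `i` for the generators `H i` of `B_{m,n}(q,t)`:
`1 ≤ i ≤ n - 1` or `1 ≤ -i ≤ m - 1`. -/
def validIdx (m n : ℕ) (i : ℤ) : Prop :=
  (1 ≤ i ∧ i ≤ (n : ℤ) - 1) ∨ (1 ≤ -i ∧ -i ≤ (m : ℤ) - 1)

/-- Generators of the quantized walled Brauer algebra `B_{m,n}(q,t)`. -/
inductive WBgen (m n : ℕ) : Type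
  | H (i : ℤ) (h : validIdx m n i) : WBgen m n
  | E : WBgen m n

/-- The generator `H i` in the free algebra. -/
def fH (m n : ℕ) (i : ℤ) (h : validIdx m n i) : FreeAlgebra KK (WBgen m n) :=
  FreeAlgebra.ι KK (WBgen.H i h)

/-- The generator `e` in the free algebra. -/
def fE (m n : ℕ) : FreeAlgebra KK (WBgen m n) := FreeAlgebra.ι KK WBgen.E

/-- The element `H i - (q - q⁻¹)`, which becomes the inverse of `H i` in the quotient. -/
def fHinv (m n : ℕ) (i : ℤ) (h : validIdx m n i) : FreeAlgebra KK (WBgen m n) :=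
  fH m n i h - algebraMap KK _ (qv - qv⁻¹)

/-- The defining relations of the quantized walled Brauer algebra `B_{m,n}(q,t)`. -/
inductive WBrel (m n : ℕ) :
    FreeAlgebra KK (WBgen m n) → FreeAlgebra KK (WBgen m n) → Prop
  | quad (i : ℤ) (h : validIdx m n i) :
      WBrel m n ((fH m n i h - algebraMap KK _ qv) * (fH m n i h + algebraMap KK _ qv⁻¹)) 0
  | comm (i : ℤ) (hi : validIdx m n i) (j : ℤ) (hj : validIdx m n j) (hij : 1 < |i - j|) :
      WBrel m n (fH m n i hi * fH m n j hj) (fH m n j hj * fH m n i hi)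
  | braid (i : ℤ) (hi : validIdx m n i) (hi1 : validIdx m n (i + 1)) :
      WBrel m n (fH m n i hi * fH m n (i + 1) hi1 * fH m n i hi)
        (fH m n (i + 1) hi1 * fH m n i hi * fH m n (i + 1) hi1)
  | commE (i : ℤ) (hi : validIdx m n i) (h2 : 2 ≤ |i|) :
      WBrel m n (fH m n i hi * fE m n) (fE m n * fH m n i hi)
  | eHe (i : ℤ) (hi : validIdx m n i) (h : i = 1 ∨ i = -1) :
      WBrel m n (fE m n * fH m n i hi * fE m n) (algebraMap KK _ tv * fE m n)
  | esq : WBrel m n (fE m n * fE m n)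
      (algebraMap KK _ ((tv - tv⁻¹) / (qv - qv⁻¹)) * fE m n)
  | rel7 (h1 : validIdx m n 1) (hm : validIdx m n (-1)) :
      WBrel m n (fE m n * fHinv m n (-1) hm * fH m n 1 h1 * fE m n * fH m n (-1) hm)
        (fE m n * fHinv m n (-1) hm * fH m n 1 h1 * fE m n * fH m n 1 h1)
  | rel8 (h1 : validIdx m n 1) (hm : validIdx m n (-1)) :
      WBrel m n (fH m n (-1) hm * fE m n * fHinv m n (-1) hm * fH m n 1 h1 * fE m n)
        (fH m n 1 h1 * fE m n * fHinv m n (-1) hm * fH m n 1 h1 * fE m n)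

/-- The quantized walled Brauer algebra `B_{m,n}(q,t)`. -/
abbrev WB (m n : ℕ) : Type := RingQuot (WBrel m n)

/-- The generator `H i` of `B_{m,n}(q,t)`. -/
def HB (m n : ℕ) (i : ℤ) (h : validIdx m n i) : WB m n :=
  RingQuot.mkAlgHom KK (WBrel m n) (fH m n i h)

/-- The generator `e` of `B_{m,n}(q,t)`. -/
def EB (m n : ℕ) : WB m n := RingQuot.mkAlgHom KK (WBrel m n) (fE m n)

/-- The inverse `H i⁻¹ = H i - (q - q⁻¹)` of the generator `H i`. -/
def HBinv (m n : ℕ) (i : ℤ) (h : validIdx m n i) : WB m n :=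
  HB m n i h - algebraMap KK _ (qv - qv⁻¹)

/-- Total version of `H i` (equal to `H i` for valid `i`, junk value `1` otherwise). -/
def Htil (m n : ℕ) (i : ℤ) : WB m n :=
  if h : validIdx m n i then HB m n i h else 1

/-- Total version of `H i⁻¹` (equal to `H i⁻¹` for valid `i`, junk value `1` otherwise). -/
def Htilinv (m n : ℕ) (i : ℤ) : WB m n :=
  if h : validIdx m n i then HBinv m n i h else 1

/-- The elements `e_k`:  `e_0 = 1`, `e_1 = e`, and
`e_{k+1} = e ⬝ H_{-1}⁻¹ H_{-2}⁻¹ ⋯ H_{-k}⁻¹ ⬝ H_1 H_2 ⋯ H_k ⬝ e_k`. -/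
def ek (m n : ℕ) : ℕ → WB m n
  | 0 => 1
  | k + 1 =>
      EB m n *
        (((List.range k).map (fun j => Htilinv m n (-((j + 1 : ℕ) : ℤ)))).prod) *
        (((List.range k).map (fun j => Htil m n ((j + 1 : ℕ) : ℤ))).prod) *
        ek m n k

/-- For `m, n ≥ 2`, the element `(H_{-1} + q⁻¹) e_2 (H_{-1} + q⁻¹)`, where
`e_2 = e H_{-1}⁻¹ H_1 e`, is fixed by the bar involution (any ring homomorphism
semilinear with respect to `q ↦ q⁻¹`, `t ↦ t⁻¹` with `H i ↦ H i⁻¹`, `e ↦ e`). -/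
theorem bar_fixes_C_e2_C (m n : ℕ) (hm : 2 ≤ m) (hn : 2 ≤ n)
    (σ : KK →+* KK) (hσq : σ qv = qv⁻¹) (hσt : σ tv = tv⁻¹)
    (f : WB m n →+* WB m n)
    (hf : ∀ c : KK, f (algebraMap KK (WB m n) c) = algebraMap KK (WB m n) (σ c))
    (hfH : ∀ (i : ℤ) (h : validIdx m n i), f (HB m n i h) = HBinv m n i h)
    (hfE : f (EB m n) = EB m n) :
    f ((Htil m n (-1) + algebraMap KK (WB m n) qv⁻¹) *
        (EB m n * Htilinv m n (-1) * Htil m n 1 * EB m n) *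
        (Htil m n (-1) + algebraMap KK (WB m n) qv⁻¹)) =
      (Htil m n (-1) + algebraMap KK (WB m n) qv⁻¹) *
        (EB m n * Htilinv m n (-1) * Htil m n 1 * EB m n) *
        (Htil m n (-1) + algebraMap KK (WB m n) qv⁻¹) := by
  have h1 : validIdx m n 1 := Or.inl ⟨le_refl 1, by omega⟩
  have hm1 : validIdx m n (-1) := Or.inr ⟨by norm_num, by omega⟩
  have hσqi : σ qv⁻¹ = qv := by rw [map_inv₀, hσq, inv_inv]
  have hσδ : σ (qv - qv⁻¹) = -(qv - qv⁻¹) := by rw [map_sub, hσq, hσqi]; ring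
  simp only [Htil, Htilinv, dif_pos h1, dif_pos hm1, HBinv]
  set E := EB m n with hE
  set a := HB m n (-1) hm1 with ha
  set b := HB m n 1 h1 with hb
  set d := algebraMap KK (WB m n) (qv - qv⁻¹) with hd
  have hdc : ∀ x : WB m n, d * x = x * d := fun x => Algebra.commutes _ x
  have relE : ∀ (i : ℤ) (hi : validIdx m n i) (h : i = 1 ∨ i = -1),
      EB m n * HB m n i hi * EB m n = algebraMap KK (WB m n) tv * EB m n := by
    intro i hi h
    have := RingQuot.mkAlgHom_rel KK (WBrel.eHe i hi h)
    simpa only [map_mul, AlgHom.commutes, HB, EB] using this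
  have r1 : E * b * E = algebraMap KK (WB m n) tv * E := relE 1 h1 (Or.inl rfl)
  have r2 : E * a * E = algebraMap KK (WB m n) tv * E := relE (-1) hm1 (Or.inr rfl)
  have swap1 : E * a * d * E = E * a * E * d := by
    rw [mul_assoc (E * a) d E, hdc, ← mul_assoc]
  have swap2 : E * d * b * E = E * b * E * d := by
    rw [mul_assoc E d b, hdc, ← mul_assoc, mul_assoc (E * b) d E, hdc, ← mul_assoc]
  have e2bar : E * a * (b - d) * E = E * (a - d) * b * E := by
    rw [mul_sub (E * a) b d, sub_mul, mul_sub E a d, sub_mul, sub_mul, swap1, swap2, r1, r2]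
  have fd : f d = -d := by rw [hd, hf, hσδ, map_neg]
  have fa : f a = a - d := by rw [ha, hd, hfH]; rfl
  have fb : f b = b - d := by rw [hb, hd, hfH]; rfl
  have fC : f (a + algebraMap KK (WB m n) qv⁻¹) = a + algebraMap KK (WB m n) qv⁻¹ := by
    rw [map_add, hf, hσqi, fa]
    have : algebraMap KK (WB m n) qv = d + algebraMap KK (WB m n) qv⁻¹ := by
      rw [hd, ← map_add, sub_add_cancel]
    rw [this]; abel
  have fM : f (E * (a - d) * b * E) = E * (a - d) * b * E := by
    rw [map_mul, map_mul, map_mul, hfE, map_sub f a d, fa, fd, fb,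
      show a - d - -d = a from by abel, e2bar]
  rw [map_mul, map_mul, fC, fM]

end
end

section
/- In B_{m,n}(q,t), for every k with 1 ≤ k ≤ min{m,n} − 1, one has e_k H_k e_k = e_k H_{-k} e_k, and both are equal to t · ((t − t⁻¹)/(q − q⁻¹))^{k−1} · e_k. -/
open scoped Classical

noncomputable section

----------------------------------------------------------------
-- auxiliary development
----------------------------------------------------------------

def sc (m n : ℕ) (x : KK) : WB m n := algebraMap KK (WB m n) x
def dl : KK := (tv - tv⁻¹) / (qv - qv⁻¹)
def cc : KK := qv - qv⁻¹

variable {m n : ℕ}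

lemma qv_ne : qv ≠ 0 := by
  simp only [qv]
  simpa using (IsFractionRing.to_map_eq_zero_iff
    (K := FractionRing (MvPolynomial (Fin 2) ℚ))).not.2 (MvPolynomial.X_ne_zero 0)

lemma sc_comm (x : KK) (a : WB m n) : sc m n x * a = a * sc m n x :=
  Algebra.commutes x a

lemma sc_pull (x : KK) (a b : WB m n) : a * (sc m n x * b) = sc m n x * (a * b) := by
  rw [← mul_assoc, ← sc_comm, mul_assoc]

lemma wb_sub (x y : WB m n) :
    x - y = @HSub.hSub (WB m n) (WB m n) (WB m n) (@instHSub (WB m n) SubNegMonoid.toSub) x y :=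
  rfl

lemma sw {a b : WB m n} (h : Commute a b) (x : WB m n) :
    a * (b * x) = b * (a * x) := by
  rw [← mul_assoc, h.eq, mul_assoc]

lemma sw2 {a b1 b2 : WB m n} (h1 : Commute a b1) (h2 : Commute a b2) (x : WB m n) :
    a * (b1 * (b2 * x)) = b1 * (b2 * (a * x)) := by rw [sw h1, sw h2]

lemma sw3 {a b1 b2 b3 : WB m n} (h1 : Commute a b1) (h2 : Commute a b2)
    (h3 : Commute a b3) (x : WB m n) :
    a * (b1 * (b2 * (b3 * x))) = b1 * (b2 * (b3 * (a * x))) := by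
  rw [sw h1, sw h2, sw h3]

lemma sw4 {a b1 b2 b3 b4 : WB m n} (h1 : Commute a b1) (h2 : Commute a b2)
    (h3 : Commute a b3) (h4 : Commute a b4) (x : WB m n) :
    a * (b1 * (b2 * (b3 * (b4 * x)))) = b1 * (b2 * (b3 * (b4 * (a * x)))) := by
  rw [sw h1, sw h2, sw h3, sw h4]

lemma sw5 {a b1 b2 b3 b4 b5 : WB m n} (h1 : Commute a b1) (h2 : Commute a b2)
    (h3 : Commute a b3) (h4 : Commute a b4) (h5 : Commute a b5) (x : WB m n) :
    a * (b1 * (b2 * (b3 * (b4 * (b5 * x))))) = b1 * (b2 * (b3 * (b4 * (b5 * (a * x))))) := by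
  rw [sw h1, sw h2, sw h3, sw h4, sw h5]

-- relations in WB

lemma Htil_eq (i : ℤ) (h : validIdx m n i) : Htil m n i = HB m n i h := dif_pos h
lemma Htilinv_eq (i : ℤ) (h : validIdx m n i) :
    Htilinv m n i = Htil m n i - sc m n cc := by
  rw [Htilinv, dif_pos h, Htil_eq i h]; rfl

lemma HB_mul_sub (i : ℤ) (h : validIdx m n i) :
    HB m n i h * (HB m n i h - sc m n cc) = 1 ∧
    (HB m n i h - sc m n cc) * HB m n i h = 1 := by
  have h0 : (HB m n i h - sc m n qv) * (HB m n i h + sc m n qv⁻¹) = 0 := by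
    have h1 := RingQuot.mkAlgHom_rel KK (WBrel.quad (m := m) (n := n) i h)
    simpa [HB, sc, map_mul, map_sub, map_add, AlgHom.commutes] using h1
  set a := HB m n i h with ha
  have e2 : sc m n qv * sc m n qv⁻¹ = 1 := by
    rw [sc, sc, ← map_mul, mul_inv_cancel₀ qv_ne, map_one]
  have expand : (a - sc m n qv) * (a + sc m n qv⁻¹)
      = a * a + a * sc m n qv⁻¹ - a * sc m n qv - 1 := by
    calc (a - sc m n qv) * (a + sc m n qv⁻¹)
        = a * (a + sc m n qv⁻¹) - sc m n qv * (a + sc m n qv⁻¹) :=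
          sub_mul a (sc m n qv) (a + sc m n qv⁻¹)
      _ = (a * a + a * sc m n qv⁻¹) - (sc m n qv * a + sc m n qv * sc m n qv⁻¹) := by
          rw [mul_add, mul_add]
      _ = (a * a + a * sc m n qv⁻¹) - (a * sc m n qv + 1) := by
          rw [e2, sc_comm qv a]
      _ = a * a + a * sc m n qv⁻¹ - a * sc m n qv - 1 := by abel
  rw [expand] at h0
  have hcc : sc m n cc = sc m n qv - sc m n qv⁻¹ := by rw [sc, sc, sc, cc, map_sub]
  constructor
  · have expand2 : a * (a - sc m n cc) = a * a - a * sc m n qv + a * sc m n qv⁻¹ := by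
      calc a * (a - sc m n cc) = a * a - a * sc m n cc := mul_sub a a (sc m n cc)
        _ = a * a - (a * sc m n qv - a * sc m n qv⁻¹) := by
            rw [hcc, mul_sub a (sc m n qv) (sc m n qv⁻¹)]
        _ = a * a - a * sc m n qv + a * sc m n qv⁻¹ := by abel
    rw [expand2]
    calc a * a - a * sc m n qv + a * sc m n qv⁻¹
        = (a * a + a * sc m n qv⁻¹ - a * sc m n qv - 1) + 1 := by abel
      _ = 1 := by rw [h0, zero_add]
  · have expand2 : (a - sc m n cc) * a = a * a - a * sc m n qv + a * sc m n qv⁻¹ := by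
      calc (a - sc m n cc) * a = a * a - sc m n cc * a := sub_mul a (sc m n cc) a
        _ = a * a - (sc m n qv * a - sc m n qv⁻¹ * a) := by
            rw [hcc, sub_mul (sc m n qv) (sc m n qv⁻¹) a]
        _ = a * a - (a * sc m n qv - a * sc m n qv⁻¹) := by
            rw [sc_comm qv a, sc_comm qv⁻¹ a]
        _ = a * a - a * sc m n qv + a * sc m n qv⁻¹ := by abel
    rw [expand2]
    calc a * a - a * sc m n qv + a * sc m n qv⁻¹
        = (a * a + a * sc m n qv⁻¹ - a * sc m n qv - 1) + 1 := by abel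
      _ = 1 := by rw [h0, zero_add]

lemma Htil_mul_inv (i : ℤ) : Htil m n i * Htilinv m n i = 1 := by
  by_cases h : validIdx m n i
  · rw [Htil_eq i h, Htilinv_eq i h, Htil_eq i h]; exact (HB_mul_sub i h).1
  · rw [Htil, Htilinv, dif_neg h, dif_neg h, one_mul]

lemma Htilinv_mul (i : ℤ) : Htilinv m n i * Htil m n i = 1 := by
  by_cases h : validIdx m n i
  · rw [Htil_eq i h, Htilinv_eq i h, Htil_eq i h]; exact (HB_mul_sub i h).2
  · rw [Htil, Htilinv, dif_neg h, dif_neg h, one_mul]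

lemma cH (i : ℤ) (x : WB m n) : Htil m n i * (Htilinv m n i * x) = x := by
  rw [← mul_assoc, Htil_mul_inv, one_mul]
lemma cHi (i : ℤ) (x : WB m n) : Htilinv m n i * (Htil m n i * x) = x := by
  rw [← mul_assoc, Htilinv_mul, one_mul]

lemma commHH {i j : ℤ} (h : i + 2 ≤ j ∨ j + 2 ≤ i) :
    Commute (Htil m n i) (Htil m n j) := by
  rw [Htil, Htil]
  split_ifs with h1 h2 h2
  · have habs : 1 < |i - j| := by
      rcases h with h | h
      · have h3 : j - i ≤ |i - j| := by rw [abs_sub_comm]; exact le_abs_self _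
        linarith
      · have h3 : i - j ≤ |i - j| := le_abs_self _
        linarith
    have := RingQuot.mkAlgHom_rel KK (WBrel.comm (m := m) (n := n) i h1 j h2 habs)
    simp only [map_mul] at this
    exact this
  · exact Commute.one_right _
  · exact Commute.one_left _
  · exact Commute.one_right _

lemma commHE {i : ℤ} (h : 2 ≤ i ∨ i ≤ -2) : Commute (Htil m n i) (EB m n) := by
  rw [Htil]
  split_ifs with h1
  · have habs : 2 ≤ |i| := by
      rcases h with h | h
      · have := le_abs_self i; linarith
      · have := neg_le_abs i; linarith
    have := RingQuot.mkAlgHom_rel KK (WBrel.commE (m := m) (n := n) i h1 habs)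
    simp only [map_mul] at this
    exact this
  · exact Commute.one_left _

lemma commInvL {i : ℤ} {y : WB m n} (h : Commute (Htil m n i) y) :
    Commute (Htilinv m n i) y := by
  by_cases hv : validIdx m n i
  · rw [Htilinv_eq i hv]
    have e1 : (Htil m n i - sc m n cc) * y = Htil m n i * y - sc m n cc * y :=
      sub_mul (Htil m n i) (sc m n cc) y
    have e2 : y * (Htil m n i - sc m n cc) = y * Htil m n i - y * sc m n cc :=
      mul_sub y (Htil m n i) (sc m n cc)
    show (Htil m n i - sc m n cc) * y = y * (Htil m n i - sc m n cc)
    rw [e1, e2, h.eq, sc_comm]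
  · rw [Htilinv, dif_neg hv]; exact Commute.one_left _

lemma commInvR {i : ℤ} {x : WB m n} (h : Commute x (Htil m n i)) :
    Commute x (Htilinv m n i) := by
  by_cases hv : validIdx m n i
  · rw [Htilinv_eq i hv]
    have e1 : (Htil m n i - sc m n cc) * x = Htil m n i * x - sc m n cc * x :=
      sub_mul (Htil m n i) (sc m n cc) x
    have e2 : x * (Htil m n i - sc m n cc) = x * Htil m n i - x * sc m n cc :=
      mul_sub x (Htil m n i) (sc m n cc)
    show x * (Htil m n i - sc m n cc) = (Htil m n i - sc m n cc) * x
    rw [e1, e2, h.eq, sc_comm]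
  · rw [Htilinv, dif_neg hv]; exact Commute.one_right _

lemma vpos {i : ℤ} (h1 : 1 ≤ i) (h2 : i + 1 ≤ (n : ℤ)) : validIdx m n i :=
  Or.inl ⟨h1, by omega⟩
lemma vneg {i : ℤ} (h1 : i ≤ -1) (h2 : 1 - i ≤ (m : ℤ)) : validIdx m n i :=
  Or.inr ⟨by omega, by omega⟩

lemma braidW (a : ℤ) (ha : validIdx m n a) (hb : validIdx m n (a + 1)) :
    Htil m n a * Htil m n (a + 1) * Htil m n a
      = Htil m n (a + 1) * Htil m n a * Htil m n (a + 1) := by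
  rw [Htil_eq a ha, Htil_eq (a + 1) hb]
  have := RingQuot.mkAlgHom_rel KK (WBrel.braid (m := m) (n := n) a ha hb)
  simpa [HB, map_mul] using this

lemma braidT (a b : ℤ) (hba : b = a + 1) (ha : validIdx m n a) (hb : validIdx m n b) :
    Htil m n a * Htil m n b * Htil m n a = Htil m n b * Htil m n a * Htil m n b := by
  subst hba; exact braidW a ha hb

lemma braidc (a b : ℤ) (hba : b = a + 1) (ha : validIdx m n a) (hb : validIdx m n b)
    (x : WB m n) :
    Htil m n a * (Htil m n b * (Htil m n a * x))
      = Htil m n b * (Htil m n a * (Htil m n b * x)) := by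
  simp only [← mul_assoc]
  rw [braidT a b hba ha hb]

lemma v1T (a b : ℤ) (hba : b = a + 1) (ha : validIdx m n a) (hb : validIdx m n b) :
    Htilinv m n a * Htil m n b * Htil m n a
      = Htil m n b * Htil m n a * Htilinv m n b := by
  have h1 : Htil m n a * (Htil m n b * (Htil m n a * Htilinv m n b))
      = Htil m n b * Htil m n a := by
    simp only [← mul_assoc]
    rw [braidT a b hba ha hb, mul_assoc, Htil_mul_inv, mul_one]
  calc Htilinv m n a * Htil m n b * Htil m n a
      = Htilinv m n a * (Htil m n b * Htil m n a) := by rw [mul_assoc]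
    _ = Htilinv m n a * (Htil m n a * (Htil m n b * (Htil m n a * Htilinv m n b))) := by
        rw [h1]
    _ = Htil m n b * (Htil m n a * Htilinv m n b) := by rw [cHi]
    _ = Htil m n b * Htil m n a * Htilinv m n b := by rw [mul_assoc]

lemma v2T (a b : ℤ) (hba : b = a + 1) (ha : validIdx m n a) (hb : validIdx m n b) :
    Htilinv m n a * Htilinv m n b * Htil m n a
      = Htil m n b * Htilinv m n a * Htilinv m n b := by
  set A := Htil m n a
  set B := Htil m n b
  set Ai := Htilinv m n a
  set Bi := Htilinv m n b
  have hxu : (Ai * Bi * A) * (Ai * B * A) = 1 := by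
    simp only [mul_assoc]
    rw [cH, cHi, Htilinv_mul]
  have huy : (B * A * Bi) * (B * Ai * Bi) = 1 := by
    simp only [mul_assoc]
    rw [cHi, cH, Htil_mul_inv]
  have huy' : (Ai * B * A) * (B * Ai * Bi) = 1 := by
    rw [v1T a b hba ha hb]; exact huy
  calc Ai * Bi * A = (Ai * Bi * A) * ((Ai * B * A) * (B * Ai * Bi)) := by
        rw [huy', mul_one]
    _ = ((Ai * Bi * A) * (Ai * B * A)) * (B * Ai * Bi) := (mul_assoc _ _ _).symm
    _ = B * Ai * Bi := by rw [hxu, one_mul]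

-- relations involving e

lemma esqW : EB m n * EB m n = sc m n dl * EB m n := by
  have h1 := RingQuot.mkAlgHom_rel KK (WBrel.esq (m := m) (n := n))
  simpa [EB, sc, dl, map_mul, AlgHom.commutes] using h1

lemma eHeW (i : ℤ) (hi : validIdx m n i) (h : i = 1 ∨ i = -1) :
    EB m n * Htil m n i * EB m n = sc m n tv * EB m n := by
  rw [Htil_eq i hi]
  have h1 := RingQuot.mkAlgHom_rel KK (WBrel.eHe (m := m) (n := n) i hi h)
  simpa [EB, HB, sc, map_mul, AlgHom.commutes] using h1

lemma rel7W (h1 : validIdx m n 1) (hm : validIdx m n (-1)) :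
    EB m n * Htilinv m n (-1) * Htil m n 1 * EB m n * Htil m n (-1)
      = EB m n * Htilinv m n (-1) * Htil m n 1 * EB m n * Htil m n 1 := by
  rw [Htil_eq 1 h1, Htil_eq (-1) hm, Htilinv_eq (-1) hm, Htil_eq (-1) hm]
  have h2 := RingQuot.mkAlgHom_rel KK (WBrel.rel7 (m := m) (n := n) h1 hm)
  have hfi : RingQuot.mkAlgHom KK (WBrel m n) (fHinv m n (-1) hm)
      = HB m n (-1) hm - sc m n cc := by
    rw [fHinv, map_sub, AlgHom.commutes]; rfl
  simp only [map_mul, hfi] at h2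
  exact h2

-- products

def An (m n : ℕ) (k : ℕ) : WB m n :=
  ((List.range k).map (fun j => Htilinv m n (-((j + 1 : ℕ) : ℤ)))).prod
def Bn (m n : ℕ) (k : ℕ) : WB m n :=
  ((List.range k).map (fun j => Htil m n ((j + 1 : ℕ) : ℤ))).prod
def Fc (m n : ℕ) (k : ℕ) : WB m n := EB m n * An m n k * Bn m n k
def Cn (m n : ℕ) : ℕ → WB m n
  | 0 => 1
  | k + 1 => Htilinv m n ((k : ℤ) + 1) * Cn m n k

lemma ek_succ (k : ℕ) : ek m n (k + 1) = Fc m n k * ek m n k := rfl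

lemma An_zero : An m n 0 = 1 := by simp [An]
lemma Bn_zero : Bn m n 0 = 1 := by simp [Bn]
lemma Fc_zero : Fc m n 0 = EB m n := by simp [Fc, An_zero, Bn_zero]

lemma An_succ (k : ℕ) : An m n (k + 1) = An m n k * Htilinv m n (-((k : ℤ) + 1)) := by
  have e : ((k + 1 : ℕ) : ℤ) = (k : ℤ) + 1 := by push_cast; ring
  rw [An, List.range_succ, List.map_append, List.prod_append]
  simp [An, e]

lemma Bn_succ (k : ℕ) : Bn m n (k + 1) = Bn m n k * Htil m n ((k : ℤ) + 1) := by
  have e : ((k + 1 : ℕ) : ℤ) = (k : ℤ) + 1 := by push_cast; ring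
  rw [Bn, List.range_succ, List.map_append, List.prod_append]
  simp [Bn, e]

lemma commAn {x : WB m n} (k : ℕ)
    (h : ∀ j : ℕ, j < k → Commute x (Htilinv m n (-((j : ℤ) + 1)))) :
    Commute x (An m n k) := by
  apply Commute.list_prod_right
  intro y hy
  simp only [List.mem_map, List.mem_range] at hy
  obtain ⟨j, hj, rfl⟩ := hy
  have e : ((j + 1 : ℕ) : ℤ) = (j : ℤ) + 1 := by push_cast; ring
  rw [e]
  exact h j hj

lemma commBn {x : WB m n} (k : ℕ)
    (h : ∀ j : ℕ, j < k → Commute x (Htil m n ((j : ℤ) + 1))) :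
    Commute x (Bn m n k) := by
  apply Commute.list_prod_right
  intro y hy
  simp only [List.mem_map, List.mem_range] at hy
  obtain ⟨j, hj, rfl⟩ := hy
  have e : ((j + 1 : ℕ) : ℤ) = (j : ℤ) + 1 := by push_cast; ring
  rw [e]
  exact h j hj

lemma commCn {x : WB m n} (k : ℕ)
    (h : ∀ j : ℕ, j < k → Commute x (Htilinv m n ((j : ℤ) + 1))) :
    Commute x (Cn m n k) := by
  induction k with
  | zero => exact Commute.one_right _
  | succ k IH =>
      show Commute x (Htilinv m n ((k : ℤ) + 1) * Cn m n k)
      exact (h k (by omega)).mul_right (IH (fun j hj => h j (by omega)))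

lemma commHAn (i : ℤ) (k : ℕ) (h : 1 ≤ i ∨ i ≤ -((k : ℤ) + 2)) :
    Commute (Htil m n i) (An m n k) := by
  refine commAn k (fun j hj => commInvR (commHH ?_))
  have : (j : ℤ) < (k : ℤ) := by exact_mod_cast hj
  have hj0 : (0 : ℤ) ≤ (j : ℤ) := Int.natCast_nonneg j
  rcases h with h | h
  · right; omega
  · left; omega

lemma commHBn (i : ℤ) (k : ℕ) (h : i ≤ -1 ∨ (k : ℤ) + 2 ≤ i) :
    Commute (Htil m n i) (Bn m n k) := by
  refine commBn k (fun j hj => commHH ?_)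
  have : (j : ℤ) < (k : ℤ) := by exact_mod_cast hj
  have hj0 : (0 : ℤ) ≤ (j : ℤ) := Int.natCast_nonneg j
  rcases h with h | h
  · left; omega
  · right; omega

lemma commHCn (i : ℤ) (k : ℕ) (h : i ≤ -1 ∨ (k : ℤ) + 2 ≤ i) :
    Commute (Htil m n i) (Cn m n k) := by
  refine commCn k (fun j hj => commInvR (commHH ?_))
  have : (j : ℤ) < (k : ℤ) := by exact_mod_cast hj
  have hj0 : (0 : ℤ) ≤ (j : ℤ) := Int.natCast_nonneg j
  rcases h with h | h
  · left; omega
  · right; omega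

lemma CnBn (k : ℕ) : Cn m n k * Bn m n k = 1 := by
  induction k with
  | zero => rw [Bn_zero]; show (1 : WB m n) * 1 = 1; rw [one_mul]
  | succ k IH =>
      show (Htilinv m n ((k : ℤ) + 1) * Cn m n k) * Bn m n (k + 1) = 1
      rw [Bn_succ, ← mul_assoc, mul_assoc (Htilinv m n ((k : ℤ) + 1) * Cn m n k)]
      rw [mul_assoc (Htilinv m n ((k : ℤ) + 1))]
      rw [← mul_assoc (Cn m n k), IH, one_mul, Htilinv_mul]

lemma CnBnc (k : ℕ) (y : WB m n) : Cn m n k * (Bn m n k * y) = y := by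
  rw [← mul_assoc, CnBn, one_mul]

lemma commHek (i : ℤ) (k : ℕ) (h : (k : ℤ) + 1 ≤ i ∨ i + ((k : ℤ) + 1) ≤ 0) :
    Commute (Htil m n i) (ek m n k) := by
  induction k with
  | zero => exact Commute.one_right _
  | succ k IH =>
      rw [ek_succ, Fc]
      have hE : Commute (Htil m n i) (EB m n) := by
        apply commHE
        rcases h with h | h
        · left; push_cast at h ⊢; omega
        · right; push_cast at h ⊢; omega
      have hA : Commute (Htil m n i) (An m n k) := by
        apply commHAn
        rcases h with h | h
        · left; push_cast at h ⊢; omega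
        · right; push_cast at h ⊢; omega
      have hB : Commute (Htil m n i) (Bn m n k) := by
        apply commHBn
        rcases h with h | h
        · right; push_cast at h ⊢; omega
        · left; push_cast at h ⊢; omega
      have hek : Commute (Htil m n i) (ek m n k) := by
        apply IH
        rcases h with h | h
        · left; push_cast at h ⊢; omega
        · right; push_cast at h ⊢; omega
      exact ((hE.mul_right hA).mul_right hB).mul_right hek

lemma ekE (k : ℕ) (hk : 1 ≤ k) : ek m n k * EB m n = sc m n dl * ek m n k := by
  induction k with
  | zero => omega
  | succ k IH =>
      rcases Nat.eq_zero_or_pos k with h1 | h1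
      · subst h1
        have e1 : ek m n 1 = EB m n := by
          show EB m n * _ * _ * ek m n 0 = EB m n
          show EB m n * _ * _ * 1 = EB m n
          simp
        rw [e1, esqW]
      · rw [ek_succ, mul_assoc, IH h1, sc_pull, ← ek_succ]

lemma ekEc (k : ℕ) (hk : 1 ≤ k) (y : WB m n) :
    ek m n k * (EB m n * y) = sc m n dl * (ek m n k * y) := by
  rw [← mul_assoc, ekE k hk, mul_assoc]

lemma v1c (a b : ℤ) (hba : b = a + 1) (ha : validIdx m n a) (hb : validIdx m n b)
    (x : WB m n) :
    Htilinv m n a * (Htil m n b * (Htil m n a * x))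
      = Htil m n b * (Htil m n a * (Htilinv m n b * x)) := by
  simp only [← mul_assoc]
  rw [v1T a b hba ha hb]

lemma v2c (a b : ℤ) (hba : b = a + 1) (ha : validIdx m n a) (hb : validIdx m n b)
    (x : WB m n) :
    Htilinv m n a * (Htilinv m n b * (Htil m n a * x))
      = Htil m n b * (Htilinv m n a * (Htilinv m n b * x)) := by
  simp only [← mul_assoc]
  rw [v2T a b hba ha hb]

lemma keyT : ∀ i : ℕ, i + 2 ≤ min m n → ∀ x : WB m n,
    Fc m n (i + 1) * (Fc m n i * (Htil m n (-((i : ℤ) + 1)) * x))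
      = Fc m n (i + 1) * (Fc m n i * (Htil m n ((i : ℤ) + 1) * x)) := by
  intro i
  induction i with
  | zero =>
      intro h x
      have hm2 : 2 ≤ m := le_trans h (Nat.min_le_left m n)
      have hn2 : 2 ≤ n := le_trans h (Nat.min_le_right m n)
      have hv1 : validIdx m n 1 := vpos (by omega) (by omega)
      have hvm : validIdx m n (-1) := vneg (by omega) (by omega)
      have h7 := rel7W hv1 hvm
      have h7x := congrArg (· * x) h7
      simp only [Fc, An_succ, Bn_succ, An_zero, Bn_zero, Nat.cast_zero, zero_add,
        one_mul, mul_one] at *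
      simp only [mul_assoc] at h7x ⊢
      exact h7x
  | succ i IH =>
      intro h x
      have hmn : i + 3 ≤ m := le_trans h (Nat.min_le_left m n)
      have hnn : i + 3 ≤ n := le_trans h (Nat.min_le_right m n)
      -- validity
      have hvp1 : validIdx m n ((i : ℤ) + 1) := vpos (by omega) (by omega)
      have hvp2 : validIdx m n (((i + 1 : ℕ) : ℤ) + 1) := vpos (by push_cast; omega) (by push_cast; omega)
      have hvq1 : validIdx m n (-((i : ℤ) + 1)) := vneg (by omega) (by omega)
      have hvq2 : validIdx m n (-(((i + 1 : ℕ) : ℤ) + 1)) := vneg (by push_cast; omega) (by push_cast; omega)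
      -- commutation facts
      have c_p1_q2 : Commute (Htil m n ((i : ℤ) + 1)) (Htil m n (-(((i + 1 : ℕ) : ℤ) + 1))) :=
        commHH (by right; push_cast; omega)
      have c_B2_q2 : Commute (Bn m n i) (Htil m n (-(((i + 1 : ℕ) : ℤ) + 1))) :=
        (commHBn _ i (by left; push_cast; omega)).symm
      have c_q2i_B2 : Commute (Htilinv m n (-(((i + 1 : ℕ) : ℤ) + 1))) (Bn m n i) :=
        commInvL (commHBn _ i (by left; push_cast; omega))
      have c_q2i_p1 : Commute (Htilinv m n (-(((i + 1 : ℕ) : ℤ) + 1))) (Htil m n ((i : ℤ) + 1)) :=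
        commInvL (commHH (by left; push_cast; omega))
      have c_q2i_p2 : Commute (Htilinv m n (-(((i + 1 : ℕ) : ℤ) + 1)))
          (Htil m n (((i + 1 : ℕ) : ℤ) + 1)) :=
        commInvL (commHH (by left; push_cast; omega))
      have c_q2i_E : Commute (Htilinv m n (-(((i + 1 : ℕ) : ℤ) + 1))) (EB m n) :=
        commInvL (commHE (by right; push_cast; omega))
      have c_q2i_A2 : Commute (Htilinv m n (-(((i + 1 : ℕ) : ℤ) + 1))) (An m n i) :=
        commInvL (commHAn _ i (by right; push_cast; omega))
      have c_p2_E : Commute (Htil m n (((i + 1 : ℕ) : ℤ) + 1)) (EB m n) :=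
        commHE (by left; push_cast; omega)
      have c_p2_A2 : Commute (Htil m n (((i + 1 : ℕ) : ℤ) + 1)) (An m n i) :=
        commHAn _ i (by left; push_cast; omega)
      have c_p2_q1 : Commute (Htil m n (((i + 1 : ℕ) : ℤ) + 1)) (Htil m n (-((i : ℤ) + 1))) :=
        commHH (by right; push_cast; omega)
      have c_p2_q2i : Commute (Htil m n (((i + 1 : ℕ) : ℤ) + 1))
          (Htilinv m n (-(((i + 1 : ℕ) : ℤ) + 1))) := c_q2i_p2.symm
      have c_q1i_p2 : Commute (Htilinv m n (-((i : ℤ) + 1))) (Htil m n (((i + 1 : ℕ) : ℤ) + 1)) :=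
        commInvL (commHH (by left; push_cast; omega))
      have c_p2_q1i : Commute (Htil m n (((i + 1 : ℕ) : ℤ) + 1))
          (Htilinv m n (-((i : ℤ) + 1))) := c_q1i_p2.symm
      have c_p2_B2 : Commute (Htil m n (((i + 1 : ℕ) : ℤ) + 1)) (Bn m n i) :=
        commHBn _ i (by right; push_cast; omega)
      have c_q1i_B2 : Commute (Htilinv m n (-((i : ℤ) + 1))) (Bn m n i) :=
        commInvL (commHBn _ i (by left; omega))
      have c_q1_B2 : Commute (Htil m n (-((i : ℤ) + 1))) (Bn m n i) :=
        commHBn _ i (by left; omega)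
      have c_q1i_p1 : Commute (Htilinv m n (-((i : ℤ) + 1))) (Htil m n ((i : ℤ) + 1)) :=
        commInvL (commHH (by left; omega))
      have c_q2i_p1' : Commute (Htilinv m n (-(((i + 1 : ℕ) : ℤ) + 1))) (Htil m n ((i : ℤ) + 1)) :=
        c_q2i_p1
      -- the continuation for the induction hypothesis
      set x' : WB m n := Htil m n (((i + 1 : ℕ) : ℤ) + 1) *
        (Htilinv m n (-(((i + 1 : ℕ) : ℤ) + 1)) *
          (Htilinv m n (-((i : ℤ) + 1)) * (Htil m n ((i : ℤ) + 1) * x))) with hx'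
      have IH' := IH (by omega) x'
      simp only [Fc, An_succ, Bn_succ, mul_assoc] at IH' ⊢
      -- left-hand side
      conv_lhs =>
        rw [sw c_p1_q2, sw c_B2_q2,
          sw5 c_q2i_B2 c_q2i_p1 c_q2i_p2 c_q2i_E c_q2i_A2,
          v2c (-(((i + 1 : ℕ) : ℤ) + 1)) (-((i : ℤ) + 1)) (by push_cast; ring) hvq2 hvq1,
          sw3 c_p2_E c_p2_A2 c_p2_q1]
        enter [2, 2, 2, 2, 2]
        rw [sw c_q1i_B2, sw c_q2i_B2, sw c_p2_B2, sw c_q1_B2]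
      -- right-hand side
      conv_rhs =>
        rw [sw5 c_q2i_B2 c_q2i_p1 c_q2i_p2 c_q2i_E c_q2i_A2,
          sw5 c_p2_E c_p2_A2 c_p2_q2i c_p2_q1i c_p2_B2,
          ← braidc ((i : ℤ) + 1) (((i + 1 : ℕ) : ℤ) + 1) (by push_cast; ring) hvp1 hvp2]
        enter [2, 2, 2, 2, 2]
        rw [sw c_q1i_B2, sw c_q2i_B2, sw c_q1i_p1, sw c_q2i_p1', sw c_q1i_p2, sw c_q2i_p2]
      exact IH'

lemma ekH : ∀ N j : ℕ, 1 ≤ j → j < N → j + 1 ≤ min m n →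
    ek m n N * Htil m n (-(j : ℤ)) = ek m n N * Htil m n (j : ℤ) := by
  intro N
  induction N with
  | zero => intro j h1 h2 h3; omega
  | succ N IHN =>
      intro j h1 h2 h3
      rcases Nat.lt_or_ge j N with hlt | hge
      · rw [ek_succ, mul_assoc, mul_assoc, IHN j h1 hlt h3]
      · have hjN : j = N := by omega
        subst hjN
        obtain ⟨j', rfl⟩ : ∃ j', j = j' + 1 := ⟨j - 1, by omega⟩
        have ec : ((j' + 1 : ℕ) : ℤ) = (j' : ℤ) + 1 := by push_cast; ring
        rw [ec]
        have hcm : Commute (Htil m n (-((j' : ℤ) + 1))) (ek m n j') :=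
          commHek _ _ (by right; omega)
        have hcp : Commute (Htil m n ((j' : ℤ) + 1)) (ek m n j') :=
          commHek _ _ (by left; omega)
        rw [ek_succ, ek_succ]
        simp only [mul_assoc]
        rw [hcm.symm.eq, hcp.symm.eq]
        simp only [← mul_assoc]
        have hkT := keyT j' (by omega) (ek m n j')
        simp only [← mul_assoc] at hkT
        exact hkT

lemma ekHinv (N j : ℕ) (h1 : 1 ≤ j) (h2 : j < N) (h3 : j + 1 ≤ min m n) :
    ek m n N * Htilinv m n (-(j : ℤ)) = ek m n N * Htilinv m n (j : ℤ) := by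
  have hm1 : j + 1 ≤ m := le_trans h3 (Nat.min_le_left m n)
  have hn1 : j + 1 ≤ n := le_trans h3 (Nat.min_le_right m n)
  have hvp : validIdx m n (j : ℤ) := vpos (by omega) (by omega)
  have hvm : validIdx m n (-(j : ℤ)) := vneg (by omega) (by omega)
  rw [Htilinv_eq _ hvp, Htilinv_eq _ hvm]
  have e1 : ek m n N * (Htil m n (-(j : ℤ)) - sc m n cc)
      = ek m n N * Htil m n (-(j : ℤ)) - ek m n N * sc m n cc :=
    mul_sub (ek m n N) (Htil m n (-(j : ℤ))) (sc m n cc)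
  have e2 : ek m n N * (Htil m n (j : ℤ) - sc m n cc)
      = ek m n N * Htil m n (j : ℤ) - ek m n N * sc m n cc :=
    mul_sub (ek m n N) (Htil m n (j : ℤ)) (sc m n cc)
  rw [e1, e2, ekH N j h1 h2 h3]

lemma ekAn : ∀ k N : ℕ, k < N → k + 1 ≤ min m n →
    ek m n N * An m n k = ek m n N * Cn m n k := by
  intro k
  induction k with
  | zero => intro N h1 h2; rw [An_zero]; rfl
  | succ k IHk =>
      intro N h1 h2
      rw [An_succ, ← mul_assoc, IHk N (by omega) (by omega), mul_assoc]
      have hc : Commute (Htilinv m n (-((k : ℤ) + 1))) (Cn m n k) :=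
        commInvL (commHCn _ _ (by left; omega))
      rw [hc.symm.eq]
      have ec : ((k + 1 : ℕ) : ℤ) = (k : ℤ) + 1 := by push_cast; ring
      have hinv := ekHinv N (k + 1) (by omega) h1 h2
      rw [ec] at hinv
      rw [← mul_assoc, hinv, mul_assoc]
      rfl

lemma CnHB (k : ℕ) :
    Cn m n (k + 1) * (Htil m n (((k + 1 : ℕ) : ℤ) + 1) * Bn m n (k + 1))
      = Htilinv m n ((k : ℤ) + 1) * (Htil m n (((k + 1 : ℕ) : ℤ) + 1) * Htil m n ((k : ℤ) + 1)) := by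
  have hc : Commute (Htil m n (((k + 1 : ℕ) : ℤ) + 1)) (Cn m n k) :=
    commHCn _ _ (by right; push_cast; omega)
  show Htilinv m n ((k : ℤ) + 1) * Cn m n k * _ = _
  rw [Bn_succ]
  simp only [mul_assoc]
  rw [sw hc.symm, CnBnc k]

lemma Fc_def (k : ℕ) : Fc m n k = EB m n * An m n k * Bn m n k := rfl

lemma ek_one : ek m n 1 = EB m n := by
  show EB m n * _ * _ * ek m n 0 = EB m n
  show EB m n * _ * _ * 1 = EB m n
  simp

lemma mainP : ∀ j : ℕ, j + 2 ≤ min m n →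
    (ek m n (j + 1) * Htil m n ((j : ℤ) + 1) * ek m n (j + 1)
        = sc m n tv * sc m n (dl ^ j) * ek m n (j + 1)) ∧
    (ek m n (j + 1) * Htil m n (-((j : ℤ) + 1)) * ek m n (j + 1)
        = sc m n tv * sc m n (dl ^ j) * ek m n (j + 1)) := by
  intro j
  induction j with
  | zero =>
      intro h
      have hm2 : 2 ≤ m := le_trans h (Nat.min_le_left m n)
      have hn2 : 2 ≤ n := le_trans h (Nat.min_le_right m n)
      have hv1 : validIdx m n 1 := vpos (by omega) (by omega)
      have hvm : validIdx m n (-1) := vneg (by omega) (by omega)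
      have e0 : sc m n (dl ^ 0) = 1 := by rw [pow_zero, sc, map_one]
      simp only [ek_one, Nat.cast_zero, zero_add, e0, mul_one]
      exact ⟨eHeW 1 hv1 (Or.inl rfl), eHeW (-1) hvm (Or.inr rfl)⟩
  | succ j IHj =>
      intro h
      have IH := IHj (by omega)
      have hmn : j + 3 ≤ m := le_trans h (Nat.min_le_left m n)
      have hnn : j + 3 ≤ n := le_trans h (Nat.min_le_right m n)
      have hvp1 : validIdx m n ((j : ℤ) + 1) := vpos (by omega) (by omega)
      have hvp2 : validIdx m n (((j + 1 : ℕ) : ℤ) + 1) :=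
        vpos (by push_cast; omega) (by push_cast; omega)
      have hvq1 : validIdx m n (-((j : ℤ) + 1)) := vneg (by omega) (by omega)
      have hvq2 : validIdx m n (-(((j + 1 : ℕ) : ℤ) + 1)) :=
        vneg (by push_cast; omega) (by push_cast; omega)
      -- commutation facts
      have cP2E : Commute (Htil m n (((j + 1 : ℕ) : ℤ) + 1)) (EB m n) :=
        commHE (by left; push_cast; omega)
      have cP2A : Commute (Htil m n (((j + 1 : ℕ) : ℤ) + 1)) (An m n (j + 1)) :=
        commHAn _ _ (by left; push_cast; omega)
      have cP2ek1 : Commute (Htil m n (((j + 1 : ℕ) : ℤ) + 1)) (ek m n (j + 1)) :=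
        commHek (((j + 1 : ℕ) : ℤ) + 1) (j + 1) (by left; push_cast; omega)
      have cP2iek1 : Commute (Htilinv m n (((j + 1 : ℕ) : ℤ) + 1)) (ek m n (j + 1)) :=
        commInvL cP2ek1
      have cQ2E : Commute (Htil m n (-(((j + 1 : ℕ) : ℤ) + 1))) (EB m n) :=
        commHE (by right; push_cast; omega)
      have cQ2Aj : Commute (Htil m n (-(((j + 1 : ℕ) : ℤ) + 1))) (An m n j) :=
        commHAn _ _ (by right; push_cast; omega)
      have cQ2Bj : Commute (Htil m n (-(((j + 1 : ℕ) : ℤ) + 1))) (Bn m n j) :=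
        commHBn _ _ (by left; push_cast; omega)
      have cQ1iBj : Commute (Htilinv m n (-((j : ℤ) + 1))) (Bn m n j) :=
        commInvL (commHBn _ _ (by left; omega))
      have cQ1iP1 : Commute (Htilinv m n (-((j : ℤ) + 1))) (Htil m n ((j : ℤ) + 1)) :=
        commInvL (commHH (by left; omega))
      have cQ2P1 : Commute (Htil m n (-(((j + 1 : ℕ) : ℤ) + 1))) (Htil m n ((j : ℤ) + 1)) :=
        commHH (by left; push_cast; omega)
      have cQ2ek1 : Commute (Htil m n (-(((j + 1 : ℕ) : ℤ) + 1))) (ek m n (j + 1)) :=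
        commHek (-(((j + 1 : ℕ) : ℤ) + 1)) (j + 1) (by right; push_cast; omega)
      have cQ2iek1 : Commute (Htilinv m n (-(((j + 1 : ℕ) : ℤ) + 1))) (ek m n (j + 1)) :=
        commInvL cQ2ek1
      -- contextified helper equalities
      have hekAnc1 : ∀ y : WB m n, ek m n (j + 1 + 1) * (An m n (j + 1) * y)
          = ek m n (j + 1 + 1) * (Cn m n (j + 1) * y) := by
        intro y
        have h0 := congrArg (· * y) (ekAn (j + 1) (j + 1 + 1) (by omega) (by omega))
        simpa only [mul_assoc] using h0
      have hekAnc2 : ∀ y : WB m n, ek m n (j + 1 + 1) * (An m n j * y)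
          = ek m n (j + 1 + 1) * (Cn m n j * y) := by
        intro y
        have h0 := congrArg (· * y) (ekAn j (j + 1 + 1) (by omega) (by omega))
        simpa only [mul_assoc] using h0
      have hCnHBc : ∀ y : WB m n,
          Cn m n (j + 1) * (Htil m n (((j + 1 : ℕ) : ℤ) + 1) * (Bn m n (j + 1) * y))
            = Htilinv m n ((j : ℤ) + 1) *
                (Htil m n (((j + 1 : ℕ) : ℤ) + 1) * (Htil m n ((j : ℤ) + 1) * y)) := by
        intro y
        have h0 := congrArg (· * y) (CnHB j)
        simpa only [mul_assoc] using h0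
      have IHpc : ∀ y : WB m n,
          ek m n (j + 1) * (Htil m n ((j : ℤ) + 1) * (ek m n (j + 1) * y))
            = sc m n tv * (sc m n (dl ^ j) * (ek m n (j + 1) * y)) := by
        intro y
        have h0 := congrArg (· * y) IH.1
        simpa only [mul_assoc] using h0
      have IHmc : ∀ y : WB m n,
          ek m n (j + 1) * (Htil m n (-((j : ℤ) + 1)) * (ek m n (j + 1) * y))
            = sc m n tv * (sc m n (dl ^ j) * (ek m n (j + 1) * y)) := by
        intro y
        have h0 := congrArg (· * y) IH.2
        simpa only [mul_assoc] using h0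
      have hekHc : ∀ y : WB m n,
          ek m n (j + 1 + 1) * (Htil m n ((j : ℤ) + 1) * y)
            = ek m n (j + 1 + 1) * (Htil m n (-((j : ℤ) + 1)) * y) := by
        intro y
        have h0 := ekH (m := m) (n := n) (j + 1 + 1) (j + 1) (by omega) (by omega) (by omega)
        have ec : ((j + 1 : ℕ) : ℤ) = (j : ℤ) + 1 := by push_cast; ring
        rw [ec] at h0
        have h1 := congrArg (· * y) h0.symm
        simpa only [mul_assoc] using h1
      have hscal : sc m n dl * (sc m n tv * sc m n (dl ^ j))
          = sc m n tv * sc m n (dl ^ (j + 1)) := by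
        simp only [sc, ← map_mul]
        congr 1
        ring
      constructor
      -- positive case
      · conv_lhs => rw [mul_assoc]; rhs; rhs; rw [ek_succ, Fc_def]
        simp only [mul_assoc]
        rw [sw cP2E, ekEc (j + 1 + 1) (by omega), sw cP2A, hekAnc1, hCnHBc,
          v1c ((j : ℤ) + 1) (((j + 1 : ℕ) : ℤ) + 1) (by push_cast; ring) hvp1 hvp2,
          cP2iek1.eq]
        conv_lhs => rw [ek_succ]
        simp only [mul_assoc]
        rw [sw cP2ek1.symm, IHpc]
        rw [sc_pull tv (Htil m n (((j + 1 : ℕ) : ℤ) + 1)),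
          sc_pull tv (Fc m n (j + 1)),
          sc_pull (dl ^ j) (Htil m n (((j + 1 : ℕ) : ℤ) + 1)),
          sc_pull (dl ^ j) (Fc m n (j + 1))]
        rw [sw cP2ek1, Htil_mul_inv, mul_one, ← ek_succ]
        simp only [← mul_assoc]
        rw [mul_assoc (sc m n dl), hscal]
      -- negative case
      · conv_lhs => rw [mul_assoc]; rhs; rhs; rw [ek_succ, Fc_def]
        simp only [mul_assoc]
        rw [sw cQ2E, ekEc (j + 1 + 1) (by omega), An_succ, Bn_succ]
        simp only [mul_assoc]
        rw [sw cQ2Aj, sw cQ1iBj, sw cQ2Bj, hekAnc2, CnBnc, sw cQ1iP1, sw cQ2P1, hekHc,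
          ← v1c (-(((j + 1 : ℕ) : ℤ) + 1)) (-((j : ℤ) + 1)) (by push_cast; ring) hvq2 hvq1,
          cQ2ek1.eq]
        conv_lhs => rw [ek_succ]
        simp only [mul_assoc]
        rw [sw cQ2iek1.symm, IHmc]
        rw [sc_pull tv (Htilinv m n (-(((j + 1 : ℕ) : ℤ) + 1))),
          sc_pull tv (Fc m n (j + 1)),
          sc_pull (dl ^ j) (Htilinv m n (-(((j + 1 : ℕ) : ℤ) + 1))),
          sc_pull (dl ^ j) (Fc m n (j + 1))]
        rw [sw cQ2iek1, Htilinv_mul, mul_one, ← ek_succ]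
        simp only [← mul_assoc]
        rw [mul_assoc (sc m n dl), hscal]

/-- For `1 ≤ k ≤ min{m,n} - 1`, one has `e_k H_k e_k = e_k H_{-k} e_k`, and both equal
`t ((t - t⁻¹)/(q - q⁻¹))^{k-1} e_k`. -/
theorem ek_Hk_ek (m n : ℕ) (hm : 1 ≤ m) (hn : 1 ≤ n) (k : ℕ)
    (hk1 : 1 ≤ k) (hk : k + 1 ≤ min m n) :
    ek m n k * Htil m n (k : ℤ) * ek m n k = ek m n k * Htil m n (-(k : ℤ)) * ek m n k ∧
      ek m n k * Htil m n (k : ℤ) * ek m n k =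
        algebraMap KK (WB m n) (tv * ((tv - tv⁻¹) / (qv - qv⁻¹)) ^ (k - 1)) *
          ek m n k := by
  obtain ⟨j, rfl⟩ : ∃ j, k = j + 1 := ⟨k - 1, by omega⟩
  have h := mainP (m := m) (n := n) j (by omega)
  have ec : ((j + 1 : ℕ) : ℤ) = (j : ℤ) + 1 := by push_cast; ring
  rw [ec]
  have hsub : j + 1 - 1 = j := by omega
  rw [hsub]
  have e2 : algebraMap KK (WB m n) (tv * ((tv - tv⁻¹) / (qv - qv⁻¹)) ^ j)
      = sc m n tv * sc m n (dl ^ j) := by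
    rw [map_mul]; rfl
  rw [e2]
  exact ⟨h.1.trans h.2.symm, h.1⟩


end
end
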